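/- Let l₀,…,l₄ be ℂ-linearly independent linear forms in R. Let M be the 6×6 skew-symmetric matrix over R with rows (0, l₀, l₁, 0, 0, 0), (−l₀, 0, l₂, 0, 0, 0), (−l₁, −l₂, 0, 0, 0, 0), (0, 0, 0, 0, l₁, l₂), (0, 0, 0, −l₁, 0, l₃), (0, 0, 0, −l₂, −l₃, 0), and let S be the 6×2 matrix over R with first column (l₂, −l₁, l₀, 0, 0, 0) and second column (0, 0, 0, l₃, −l₂, l₁). Then: (i) the kernel of the R-module homomorphism R⁶ → R², v ↦ Sᵀv, equals the image of the R-module homomorphism R⁶ → R⁶, v ↦ Mv; (ii) the ideal of R generated by the fifteen 2×2 minors of S equals the sub-Pfaffian ideal I₄(M). -/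

import Mathlib

open MvPolynomial Matrix

noncomputable section

/-- The polynomial ring `R = ℂ[x₀,…,x₄]`. -/
abbrev Rp : Type := MvPolynomial (Fin 5) ℂ

/-- The sub-Pfaffian `q_{αβ}(N)` of a `6 × 6` matrix: for `α < β` it is
`N_{ij}N_{kl} − N_{ik}N_{jl} + N_{il}N_{jk}` where `i < j < k < l` are the elements of
`{0,…,5} ∖ {α,β}`. -/
def subPf {A : Type*} [CommRing A] (N : Matrix (Fin 6) (Fin 6) A) (α β : Fin 6) : A :=
  match (List.finRange 6).filter (fun i => decide (i ≠ α) && decide (i ≠ β)) with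
  | [i, j, k, m] => N i j * N k m - N i k * N j m + N i m * N j k
  | _ => 0

/-- The Pfaffian of a `6 × 6` skew-symmetric matrix. -/
def pf {A : Type*} [CommRing A] (N : Matrix (Fin 6) (Fin 6) A) : A :=
  N 0 1 * subPf N 0 1 - N 0 2 * subPf N 0 2 + N 0 3 * subPf N 0 3
    - N 0 4 * subPf N 0 4 + N 0 5 * subPf N 0 5

/-- The sub-Pfaffian ideal `I₄(N)`, generated by the fifteen sub-Pfaffians. -/
def pfIdeal4 {A : Type*} [CommRing A] (N : Matrix (Fin 6) (Fin 6) A) : Ideal A :=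
  Ideal.span {x | ∃ α β : Fin 6, α < β ∧ x = subPf N α β}

lemma X_reg (s : Set (Fin 5)) (k : Fin 5) (hk : k ∉ s) (p : Rp)
    (h : X k * p ∈ Ideal.span (MvPolynomial.X '' s : Set Rp)) :
    p ∈ Ideal.span (MvPolynomial.X '' s : Set Rp) := by
  rw [mem_ideal_span_X_image] at h ⊢
  intro m hm
  have hm' : Finsupp.single k 1 + m ∈ (X k * p).support := by
    rw [mem_support_iff, coeff_X_mul]
    exact mem_support_iff.mp hm
  obtain ⟨i, his, hi⟩ := h _ hm'
  refine ⟨i, his, ?_⟩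
  have : i ≠ k := fun h => hk (h ▸ his)
  simpa [Finsupp.single_apply, this.symm] using hi

lemma finsupp_deg_one {d : Fin 5 →₀ ℕ} (h : (d.sum fun _ e => e) = 1) :
    ∃ j, d = Finsupp.single j 1 := by
  classical
  have hne : d.support.Nonempty := by
    rcases Finset.eq_empty_or_nonempty d.support with he | hne
    · exfalso; rw [Finsupp.sum, he] at h; simp at h
    · exact hne
  obtain ⟨j, hj⟩ := hne
  have hdj : 1 ≤ d j := Nat.one_le_iff_ne_zero.mpr (Finsupp.mem_support_iff.mp hj)
  have hsum : ∑ i ∈ d.support, d i = 1 := h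
  have hle : d j ≤ 1 := by
    calc d j ≤ ∑ i ∈ d.support, d i := Finset.single_le_sum (fun _ _ => Nat.zero_le _) hj
    _ = 1 := hsum
  have hdj1 : d j = 1 := le_antisymm hle hdj
  refine ⟨j, ?_⟩
  have hsub : d.support ⊆ {j} := by
    intro i hi
    by_contra hij
    have hij' : i ≠ j := by simpa using hij
    have : 2 ≤ ∑ i ∈ d.support, d i := by
      have h2 : ({i, j} : Finset (Fin 5)) ⊆ d.support := by
        intro x hx; simp at hx; rcases hx with rfl | rfl <;> assumption
      calc 2 = ∑ x ∈ ({i, j} : Finset (Fin 5)), 1 := by simp [hij']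
      _ ≤ ∑ x ∈ ({i,j} : Finset (Fin 5)), d x := by
          apply Finset.sum_le_sum; intro x hx
          have := h2 hx; exact Nat.one_le_iff_ne_zero.mpr (Finsupp.mem_support_iff.mp this)
      _ ≤ ∑ i ∈ d.support, d i := Finset.sum_le_sum_of_subset_of_nonneg h2 (by intros; positivity)
    omega
  have h2 := Finsupp.support_subset_singleton.mp hsub
  rw [h2, hdj1]

lemma homog_decomp (p : Rp) (hp : p.IsHomogeneous 1) :
    p = ∑ j, C (coeff (Finsupp.single j 1) p) * X j := by
  apply MvPolynomial.ext
  intro m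
  rw [coeff_sum]
  simp only [coeff_C_mul, coeff_X']
  by_cases hm : ∃ j, m = Finsupp.single j 1
  · obtain ⟨j, rfl⟩ := hm
    rw [Finset.sum_eq_single j]
    · simp
    · intro b _ hb
      have : Finsupp.single b 1 ≠ Finsupp.single j 1 := by
        simp [Finsupp.single_eq_single_iff, hb]
      simp [this]
    · simp
  · have h0 : coeff m p = 0 := by
      by_contra h
      have hw := hp h
      replace hw : Finsupp.degree m = 1 := by rw [Finsupp.degree_eq_weight_one]; exact hw
      have hdeg : (m.sum fun _ e => e) = 1 := by rwa [Finsupp.degree_apply] at hw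
      obtain ⟨j, hj⟩ := finsupp_deg_one hdeg
      exact hm ⟨j, hj⟩
    rw [h0]
    rw [Finset.sum_eq_zero]
    intro j _
    have : Finsupp.single j 1 ≠ m := fun h => hm ⟨j, h.symm⟩
    simp [this]

lemma sum_C_mul_comp (P Q : Matrix (Fin 5) (Fin 5) ℂ) (i : Fin 5) :
    ∑ j, C (P i j) * (∑ k, C (Q j k) * X k : Rp) = ∑ k, C ((P * Q) i k) * X k := by
  calc ∑ j, C (P i j) * (∑ k, C (Q j k) * X k : Rp)
      = ∑ j, ∑ k, C (P i j * Q j k) * X k := by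
        simp_rw [Finset.mul_sum, ← mul_assoc, ← C_mul]
    _ = ∑ k, ∑ j, (C (P i j * Q j k) * X k : Rp) := by rw [Finset.sum_comm]
    _ = ∑ k, C ((P * Q) i k) * X k := by
        simp_rw [Matrix.mul_apply, ← Finset.sum_mul, ← map_sum]

lemma sum_C_one_mul (i : Fin 5) :
    ∑ k, C ((1 : Matrix (Fin 5) (Fin 5) ℂ) i k) * X k = (X i : Rp) := by
  rw [Finset.sum_eq_single i]
  · simp [Matrix.one_apply]
  · intro b _ hb
    simp [Matrix.one_apply, hb, Ne.symm hb]
  · simp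

lemma exists_equiv (l : Fin 5 → Rp) (hl : ∀ i, (l i).IsHomogeneous 1)
    (hind : LinearIndependent ℂ l) :
    ∃ e : Rp ≃ₐ[ℂ] Rp, ∀ i, e (X i) = l i := by
  classical
  set A : Matrix (Fin 5) (Fin 5) ℂ := fun i j => coeff (Finsupp.single j 1) (l i) with hA
  have hlA : ∀ i, l i = ∑ j, C (A i j) * X j := fun i => homog_decomp _ (hl i)
  have hinj : Function.Injective A.vecMul := by
    rw [show A.vecMul = A.vecMulLinear from rfl, ← LinearMap.ker_eq_bot, LinearMap.ker_eq_bot']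
    intro c hc
    have hc' : ∀ j, ∑ i, c i * A i j = 0 := by
      intro j
      have := congrFun hc j
      simpa [Matrix.vecMulLinear_apply, Matrix.vecMul, dotProduct] using this
    have hz : ∑ i, c i • l i = 0 := by
      calc ∑ i, c i • l i = ∑ i, ∑ j, C (c i * A i j) * X j := by
            simp_rw [hlA, Finset.smul_sum, smul_eq_C_mul, ← mul_assoc, ← C_mul]
        _ = ∑ j, ∑ i, (C (c i * A i j) * X j : Rp) := by rw [Finset.sum_comm]
        _ = ∑ j, C (∑ i, c i * A i j) * X j := by simp_rw [← Finset.sum_mul, ← map_sum]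
        _ = 0 := by simp [hc']
    funext i
    exact Fintype.linearIndependent_iff.mp hind c hz i
  have hU : IsUnit A := Matrix.vecMul_injective_iff_isUnit.mp hinj
  set B := A⁻¹ with hB
  have hAB : A * B = 1 := Matrix.mul_nonsing_inv A ((Matrix.isUnit_iff_isUnit_det A).mp hU)
  have hBA : B * A = 1 := Matrix.nonsing_inv_mul A ((Matrix.isUnit_iff_isUnit_det A).mp hU)
  set φ : Rp →ₐ[ℂ] Rp := aeval l with hφ
  set ψ : Rp →ₐ[ℂ] Rp := aeval (fun i => ∑ j, C (B i j) * X j) with hψ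
  have haev : ∀ (f : Fin 5 → Rp) (r : Fin 5 → ℂ),
      aeval f (∑ j, C (r j) * X j) = ∑ j, C (r j) * f j := by
    intro f r
    rw [map_sum]
    congr 1; funext j
    rw [_root_.map_mul, aeval_X, aeval_C, algebraMap_eq]
  have h1 : φ.comp ψ = AlgHom.id ℂ Rp := by
    apply MvPolynomial.algHom_ext
    intro i
    have : φ (ψ (X i)) = X i := by
      rw [hψ, hφ]
      rw [aeval_X, haev]
      simp_rw [hlA]
      rw [sum_C_mul_comp, hBA, sum_C_one_mul]
    simpa using this
  have h2 : ψ.comp φ = AlgHom.id ℂ Rp := by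
    apply MvPolynomial.algHom_ext
    intro i
    have : ψ (φ (X i)) = X i := by
      rw [hφ, aeval_X, hlA i, hψ, haev]
      rw [sum_C_mul_comp, hAB, sum_C_one_mul]
    simpa using this
  exact ⟨AlgEquiv.ofAlgHom φ ψ h1 h2, fun i => by simp [AlgEquiv.ofAlgHom, hφ]⟩

lemma reg_single (l : Fin 5 → Rp) (hl : ∀ i, (l i).IsHomogeneous 1)
    (hind : LinearIndependent ℂ l) (i k : Fin 5) (hik : k ≠ i) (p : Rp)
    (h : l k * p ∈ Ideal.span ({l i} : Set Rp)) : p ∈ Ideal.span ({l i} : Set Rp) := by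
  obtain ⟨e, he⟩ := exists_equiv l hl hind
  set f : Rp ≃+* Rp := e.toRingEquiv with hf
  have himg : (f : Rp → Rp) '' (MvPolynomial.X '' ({i} : Set (Fin 5))) = {l i} := by
    simp [hf, he]
  have hmap : Ideal.map f (Ideal.span (MvPolynomial.X '' ({i} : Set (Fin 5))))
      = Ideal.span ({l i} : Set Rp) := by
    rw [Ideal.map_span, himg]
  rw [← hmap] at h ⊢
  rw [show l k * p = f (X k * f.symm p) by
    rw [_root_.map_mul, RingEquiv.apply_symm_apply, show f (X k) = l k from he k]] at h
  rw [Ideal.apply_mem_of_equiv_iff] at h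
  have := X_reg {i} k (by simpa using hik) (f.symm p) h
  have h2 : f (f.symm p) ∈ Ideal.map f (Ideal.span (MvPolynomial.X '' ({i} : Set (Fin 5)))) :=
    Ideal.apply_mem_of_equiv_iff.mpr this
  rwa [RingEquiv.apply_symm_apply] at h2

lemma reg_pair (l : Fin 5 → Rp) (hl : ∀ i, (l i).IsHomogeneous 1)
    (hind : LinearIndependent ℂ l) (i j k : Fin 5) (hik : k ≠ i) (hjk : k ≠ j) (p : Rp)
    (h : l k * p ∈ Ideal.span ({l i, l j} : Set Rp)) :
    p ∈ Ideal.span ({l i, l j} : Set Rp) := by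
  obtain ⟨e, he⟩ := exists_equiv l hl hind
  set f : Rp ≃+* Rp := e.toRingEquiv with hf
  have himg : (f : Rp → Rp) '' (MvPolynomial.X '' ({i, j} : Set (Fin 5))) = {l i, l j} := by
    rw [Set.image_insert_eq, Set.image_singleton, Set.image_insert_eq, Set.image_singleton]
    simp [hf, he]
  have hmap : Ideal.map f (Ideal.span (MvPolynomial.X '' ({i, j} : Set (Fin 5))))
      = Ideal.span ({l i, l j} : Set Rp) := by
    rw [Ideal.map_span, himg]
  rw [← hmap] at h ⊢
  rw [show l k * p = f (X k * f.symm p) by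
    rw [_root_.map_mul, RingEquiv.apply_symm_apply, show f (X k) = l k from he k]] at h
  rw [Ideal.apply_mem_of_equiv_iff] at h
  have := X_reg {i, j} k (by simp [hik, hjk]) (f.symm p) h
  have h2 : f (f.symm p) ∈ Ideal.map f (Ideal.span (MvPolynomial.X '' ({i, j} : Set (Fin 5)))) :=
    Ideal.apply_mem_of_equiv_iff.mpr this
  rwa [RingEquiv.apply_symm_apply] at h2

lemma koszul (a b c : Rp) (ha : a ≠ 0)
    (hb : ∀ p : Rp, b * p ∈ Ideal.span ({a} : Set Rp) → p ∈ Ideal.span ({a} : Set Rp))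
    (hc : ∀ p : Rp, c * p ∈ Ideal.span ({a, b} : Set Rp) → p ∈ Ideal.span ({a, b} : Set Rp))
    (v0 v1 v2 : Rp) (h : c * v0 - b * v1 + a * v2 = 0) :
    ∃ w0 w1 w2 : Rp, v0 = a * w1 + b * w2 ∧ v1 = -(a * w0) + c * w2 ∧
      v2 = -(b * w0) - c * w1 := by
  have h0 : c * v0 ∈ Ideal.span ({a, b} : Set Rp) := by
    rw [Ideal.mem_span_pair]
    exact ⟨-v2, v1, by linear_combination -h⟩
  obtain ⟨q, r, hqr⟩ := Ideal.mem_span_pair.mp (hc v0 h0)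
  have h1 : b * (c * r - v1) ∈ Ideal.span ({a} : Set Rp) := by
    rw [Ideal.mem_span_singleton']
    exact ⟨-(c * q + v2), by linear_combination -h - c * hqr⟩
  obtain ⟨t, ht⟩ := Ideal.mem_span_singleton'.mp (hb _ h1)
  have h2 : a * (c * q + v2 + b * t) = 0 := by linear_combination h + c * hqr + b * ht
  have h3 : c * q + v2 + b * t = 0 := by
    rcases mul_eq_zero.mp h2 with h | h
    · exact absurd h ha
    · exact h
  exact ⟨t, q, r, by linear_combination -hqr, by linear_combination ht, by linear_combination h3⟩

@[simp] lemma vec6_at3 {α : Type*} (x0 x1 x2 x3 x4 x5 : α) :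
    ![x0,x1,x2,x3,x4,x5] (3 : Fin 6) = x3 := rfl
@[simp] lemma vec6_at4 {α : Type*} (x0 x1 x2 x3 x4 x5 : α) :
    ![x0,x1,x2,x3,x4,x5] (4 : Fin 6) = x4 := rfl
@[simp] lemma vec6_at5 {α : Type*} (x0 x1 x2 x3 x4 x5 : α) :
    ![x0,x1,x2,x3,x4,x5] (5 : Fin 6) = x5 := rfl

@[simp] lemma cvRed_2_1 {α : Type*} (x : α) (u : Fin 1 → α) :
    Matrix.vecCons x u (1 : Fin 2) = u 0 := rfl
@[simp] lemma cvRed_3_1 {α : Type*} (x : α) (u : Fin 2 → α) :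
    Matrix.vecCons x u (1 : Fin 3) = u 0 := rfl
@[simp] lemma cvRed_3_2 {α : Type*} (x : α) (u : Fin 2 → α) :
    Matrix.vecCons x u (2 : Fin 3) = u 1 := rfl
@[simp] lemma cvRed_4_1 {α : Type*} (x : α) (u : Fin 3 → α) :
    Matrix.vecCons x u (1 : Fin 4) = u 0 := rfl
@[simp] lemma cvRed_4_2 {α : Type*} (x : α) (u : Fin 3 → α) :
    Matrix.vecCons x u (2 : Fin 4) = u 1 := rfl
@[simp] lemma cvRed_4_3 {α : Type*} (x : α) (u : Fin 3 → α) :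
    Matrix.vecCons x u (3 : Fin 4) = u 2 := rfl
@[simp] lemma cvRed_5_1 {α : Type*} (x : α) (u : Fin 4 → α) :
    Matrix.vecCons x u (1 : Fin 5) = u 0 := rfl
@[simp] lemma cvRed_5_2 {α : Type*} (x : α) (u : Fin 4 → α) :
    Matrix.vecCons x u (2 : Fin 5) = u 1 := rfl
@[simp] lemma cvRed_5_3 {α : Type*} (x : α) (u : Fin 4 → α) :
    Matrix.vecCons x u (3 : Fin 5) = u 2 := rfl
@[simp] lemma cvRed_5_4 {α : Type*} (x : α) (u : Fin 4 → α) :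
    Matrix.vecCons x u (4 : Fin 5) = u 3 := rfl
@[simp] lemma cvRed_6_1 {α : Type*} (x : α) (u : Fin 5 → α) :
    Matrix.vecCons x u (1 : Fin 6) = u 0 := rfl
@[simp] lemma cvRed_6_2 {α : Type*} (x : α) (u : Fin 5 → α) :
    Matrix.vecCons x u (2 : Fin 6) = u 1 := rfl
@[simp] lemma cvRed_6_3 {α : Type*} (x : α) (u : Fin 5 → α) :
    Matrix.vecCons x u (3 : Fin 6) = u 2 := rfl
@[simp] lemma cvRed_6_4 {α : Type*} (x : α) (u : Fin 5 → α) :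
    Matrix.vecCons x u (4 : Fin 6) = u 3 := rfl
@[simp] lemma cvRed_6_5 {α : Type*} (x : α) (u : Fin 5 → α) :
    Matrix.vecCons x u (5 : Fin 6) = u 4 := rfl

@[simp] lemma vecHead_lam {α : Type*} {n : ℕ} (c : α) :
    Matrix.vecHead (fun _ : Fin (n+1) => c) = c := rfl
@[simp] lemma vecTail_lam {α : Type*} {n : ℕ} (c : α) :
    Matrix.vecTail (fun _ : Fin (n+1) => c) = fun _ : Fin n => c := rfl

set_option maxHeartbeats 4000000 in
/-- Proposition 1.2, case (c). -/
theorem type_c_syzygy_and_minors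
    (l : Fin 5 → Rp) (hl : ∀ i, (l i).IsHomogeneous 1) (hind : LinearIndependent ℂ l)
    (M : Matrix (Fin 6) (Fin 6) Rp)
    (hM : M = !![0, l 0, l 1, 0, 0, 0;
                 -l 0, 0, l 2, 0, 0, 0;
                 -l 1, -l 2, 0, 0, 0, 0;
                 0, 0, 0, 0, l 1, l 2;
                 0, 0, 0, -l 1, 0, l 3;
                 0, 0, 0, -l 2, -l 3, 0])
    (S : Matrix (Fin 6) (Fin 2) Rp)
    (hS : S = !![l 2, 0;
                 -l 1, 0;
                 l 0, 0;
                 0, l 3;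
                 0, -l 2;
                 0, l 1]) :
    LinearMap.ker (Matrix.mulVecLin Sᵀ) = LinearMap.range (Matrix.mulVecLin M) ∧
    Ideal.span {x | ∃ i j : Fin 6, i < j ∧ x = S i 0 * S j 1 - S i 1 * S j 0}
      = pfIdeal4 M := by
  constructor
  · ext v
    simp only [LinearMap.mem_ker, LinearMap.mem_range, Matrix.mulVecLin_apply]
    constructor
    · intro hv
      have e1 : l 2 * v 0 - l 1 * v 1 + l 0 * v 2 = 0 := by
        have h := congrFun hv 0
        simp [hS, Matrix.mulVec, dotProduct, Fin.sum_univ_six,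
          Matrix.transpose_apply] at h
        linear_combination h
      have e2 : l 3 * v 3 - l 2 * v 4 + l 1 * v 5 = 0 := by
        have h := congrFun hv 1
        simp [hS, Matrix.mulVec, dotProduct, Fin.sum_univ_six,
          Matrix.transpose_apply] at h
        linear_combination h
      obtain ⟨w0, w1, w2, hv0, hv1, hv2⟩ :=
        koszul (l 0) (l 1) (l 2) (hind.ne_zero 0)
          (fun p hp => reg_single l hl hind 0 1 (by decide) p hp)
          (fun p hp => reg_pair l hl hind 0 1 2 (by decide) (by decide) p hp)
          (v 0) (v 1) (v 2) e1
      obtain ⟨u0, u1, u2, hv3, hv4, hv5⟩ :=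
        koszul (l 1) (l 2) (l 3) (hind.ne_zero 1)
          (fun p hp => reg_single l hl hind 1 2 (by decide) p hp)
          (fun p hp => reg_pair l hl hind 1 2 3 (by decide) (by decide) p hp)
          (v 3) (v 4) (v 5) e2
      refine ⟨![w0, w1, w2, u0, u1, u2], funext fun i => ?_⟩
      fin_cases i <;>
        simp [hM, Matrix.mulVec, dotProduct, Fin.sum_univ_six]
      · linear_combination -hv0
      · linear_combination -hv1
      · linear_combination -hv2
      · linear_combination -hv3
      · linear_combination -hv4
      · linear_combination -hv5
    · rintro ⟨w, rfl⟩
      funext i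
      fin_cases i <;>
        · simp [hM, hS, Matrix.mulVec, dotProduct, Fin.sum_univ_six,
            Matrix.transpose_apply]
          ring
  · apply le_antisymm
    · rw [Ideal.span_le]
      rintro x ⟨i, j, hij, rfl⟩
      fin_cases i <;> fin_cases j <;> try exact absurd hij (by decide)
      · convert (pfIdeal4 M).zero_mem using 1
        rw [hS]; simp
      · convert (pfIdeal4 M).zero_mem using 1
        rw [hS]; simp
      · have hmem : subPf M 0 3 ∈ pfIdeal4 M := Ideal.subset_span ⟨0, 3, by decide, rfl⟩
        convert hmem using 1
        rw [show subPf M 0 3 = M 1 2 * M 4 5 - M 1 4 * M 2 5 + M 1 5 * M 2 4 from rfl, hM, hS]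
        simp
        try ring
      · have hmem : subPf M 0 4 ∈ pfIdeal4 M := Ideal.subset_span ⟨0, 4, by decide, rfl⟩
        convert neg_mem hmem using 1
        rw [show subPf M 0 4 = M 1 2 * M 3 5 - M 1 3 * M 2 5 + M 1 5 * M 2 3 from rfl, hM, hS]
        simp
        try ring
      · have hmem : subPf M 0 5 ∈ pfIdeal4 M := Ideal.subset_span ⟨0, 5, by decide, rfl⟩
        convert hmem using 1
        rw [show subPf M 0 5 = M 1 2 * M 3 4 - M 1 3 * M 2 4 + M 1 4 * M 2 3 from rfl, hM, hS]
        simp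
        try ring
      · convert (pfIdeal4 M).zero_mem using 1
        rw [hS]; simp
      · have hmem : subPf M 1 3 ∈ pfIdeal4 M := Ideal.subset_span ⟨1, 3, by decide, rfl⟩
        convert neg_mem hmem using 1
        rw [show subPf M 1 3 = M 0 2 * M 4 5 - M 0 4 * M 2 5 + M 0 5 * M 2 4 from rfl, hM, hS]
        simp
        try ring
      · have hmem : subPf M 1 4 ∈ pfIdeal4 M := Ideal.subset_span ⟨1, 4, by decide, rfl⟩
        convert hmem using 1
        rw [show subPf M 1 4 = M 0 2 * M 3 5 - M 0 3 * M 2 5 + M 0 5 * M 2 3 from rfl, hM, hS]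
        simp
        try ring
      · have hmem : subPf M 1 5 ∈ pfIdeal4 M := Ideal.subset_span ⟨1, 5, by decide, rfl⟩
        convert neg_mem hmem using 1
        rw [show subPf M 1 5 = M 0 2 * M 3 4 - M 0 3 * M 2 4 + M 0 4 * M 2 3 from rfl, hM, hS]
        simp
        try ring
      · have hmem : subPf M 2 3 ∈ pfIdeal4 M := Ideal.subset_span ⟨2, 3, by decide, rfl⟩
        convert hmem using 1
        rw [show subPf M 2 3 = M 0 1 * M 4 5 - M 0 4 * M 1 5 + M 0 5 * M 1 4 from rfl, hM, hS]
        simp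
        try ring
      · have hmem : subPf M 2 4 ∈ pfIdeal4 M := Ideal.subset_span ⟨2, 4, by decide, rfl⟩
        convert neg_mem hmem using 1
        rw [show subPf M 2 4 = M 0 1 * M 3 5 - M 0 3 * M 1 5 + M 0 5 * M 1 3 from rfl, hM, hS]
        simp
        try ring
      · have hmem : subPf M 2 5 ∈ pfIdeal4 M := Ideal.subset_span ⟨2, 5, by decide, rfl⟩
        convert hmem using 1
        rw [show subPf M 2 5 = M 0 1 * M 3 4 - M 0 3 * M 1 4 + M 0 4 * M 1 3 from rfl, hM, hS]
        simp
        try ring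
      · convert (pfIdeal4 M).zero_mem using 1
        rw [hS]; simp
      · convert (pfIdeal4 M).zero_mem using 1
        rw [hS]; simp
      · convert (pfIdeal4 M).zero_mem using 1
        rw [hS]; simp
    · rw [pfIdeal4, Ideal.span_le]
      rintro x ⟨α, β, hab, rfl⟩
      fin_cases α <;> fin_cases β <;> try exact absurd hab (by decide)
      · show subPf M 0 1 ∈ _
        have heq : subPf M 0 1 = 0 := by
          rw [show subPf M 0 1 = M 2 3 * M 4 5 - M 2 4 * M 3 5 + M 2 5 * M 3 4 from rfl, hM]; simp
        rw [heq]
        exact Ideal.zero_mem _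
      · show subPf M 0 2 ∈ _
        have heq : subPf M 0 2 = 0 := by
          rw [show subPf M 0 2 = M 1 3 * M 4 5 - M 1 4 * M 3 5 + M 1 5 * M 3 4 from rfl, hM]; simp
        rw [heq]
        exact Ideal.zero_mem _
      · show subPf M 0 3 ∈ _
        have heq : subPf M 0 3 = S 0 0 * S 3 1 - S 0 1 * S 3 0 := by
          rw [show subPf M 0 3 = M 1 2 * M 4 5 - M 1 4 * M 2 5 + M 1 5 * M 2 4 from rfl, hM, hS]
          simp
          try ring
        rw [heq]
        exact Ideal.subset_span ⟨0, 3, by decide, rfl⟩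
      · show subPf M 0 4 ∈ _
        have heq : subPf M 0 4 = -(S 0 0 * S 4 1 - S 0 1 * S 4 0) := by
          rw [show subPf M 0 4 = M 1 2 * M 3 5 - M 1 3 * M 2 5 + M 1 5 * M 2 3 from rfl, hM, hS]
          simp
          try ring
        rw [heq]
        exact neg_mem (Ideal.subset_span ⟨0, 4, by decide, rfl⟩)
      · show subPf M 0 5 ∈ _
        have heq : subPf M 0 5 = S 0 0 * S 5 1 - S 0 1 * S 5 0 := by
          rw [show subPf M 0 5 = M 1 2 * M 3 4 - M 1 3 * M 2 4 + M 1 4 * M 2 3 from rfl, hM, hS]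
          simp
          try ring
        rw [heq]
        exact Ideal.subset_span ⟨0, 5, by decide, rfl⟩
      · show subPf M 1 2 ∈ _
        have heq : subPf M 1 2 = 0 := by
          rw [show subPf M 1 2 = M 0 3 * M 4 5 - M 0 4 * M 3 5 + M 0 5 * M 3 4 from rfl, hM]; simp
        rw [heq]
        exact Ideal.zero_mem _
      · show subPf M 1 3 ∈ _
        have heq : subPf M 1 3 = -(S 1 0 * S 3 1 - S 1 1 * S 3 0) := by
          rw [show subPf M 1 3 = M 0 2 * M 4 5 - M 0 4 * M 2 5 + M 0 5 * M 2 4 from rfl, hM, hS]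
          simp
          try ring
        rw [heq]
        exact neg_mem (Ideal.subset_span ⟨1, 3, by decide, rfl⟩)
      · show subPf M 1 4 ∈ _
        have heq : subPf M 1 4 = S 1 0 * S 4 1 - S 1 1 * S 4 0 := by
          rw [show subPf M 1 4 = M 0 2 * M 3 5 - M 0 3 * M 2 5 + M 0 5 * M 2 3 from rfl, hM, hS]
          simp
          try ring
        rw [heq]
        exact Ideal.subset_span ⟨1, 4, by decide, rfl⟩
      · show subPf M 1 5 ∈ _
        have heq : subPf M 1 5 = -(S 1 0 * S 5 1 - S 1 1 * S 5 0) := by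
          rw [show subPf M 1 5 = M 0 2 * M 3 4 - M 0 3 * M 2 4 + M 0 4 * M 2 3 from rfl, hM, hS]
          simp
          try ring
        rw [heq]
        exact neg_mem (Ideal.subset_span ⟨1, 5, by decide, rfl⟩)
      · show subPf M 2 3 ∈ _
        have heq : subPf M 2 3 = S 2 0 * S 3 1 - S 2 1 * S 3 0 := by
          rw [show subPf M 2 3 = M 0 1 * M 4 5 - M 0 4 * M 1 5 + M 0 5 * M 1 4 from rfl, hM, hS]
          simp
          try ring
        rw [heq]
        exact Ideal.subset_span ⟨2, 3, by decide, rfl⟩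
      · show subPf M 2 4 ∈ _
        have heq : subPf M 2 4 = -(S 2 0 * S 4 1 - S 2 1 * S 4 0) := by
          rw [show subPf M 2 4 = M 0 1 * M 3 5 - M 0 3 * M 1 5 + M 0 5 * M 1 3 from rfl, hM, hS]
          simp
          try ring
        rw [heq]
        exact neg_mem (Ideal.subset_span ⟨2, 4, by decide, rfl⟩)
      · show subPf M 2 5 ∈ _
        have heq : subPf M 2 5 = S 2 0 * S 5 1 - S 2 1 * S 5 0 := by
          rw [show subPf M 2 5 = M 0 1 * M 3 4 - M 0 3 * M 1 4 + M 0 4 * M 1 3 from rfl, hM, hS]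
          simp
          try ring
        rw [heq]
        exact Ideal.subset_span ⟨2, 5, by decide, rfl⟩
      · show subPf M 3 4 ∈ _
        have heq : subPf M 3 4 = 0 := by
          rw [show subPf M 3 4 = M 0 1 * M 2 5 - M 0 2 * M 1 5 + M 0 5 * M 1 2 from rfl, hM]; simp
        rw [heq]
        exact Ideal.zero_mem _
      · show subPf M 3 5 ∈ _
        have heq : subPf M 3 5 = 0 := by
          rw [show subPf M 3 5 = M 0 1 * M 2 4 - M 0 2 * M 1 4 + M 0 4 * M 1 2 from rfl, hM]; simp
        rw [heq]
        exact Ideal.zero_mem _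
      · show subPf M 4 5 ∈ _
        have heq : subPf M 4 5 = 0 := by
          rw [show subPf M 4 5 = M 0 1 * M 2 3 - M 0 2 * M 1 3 + M 0 3 * M 1 2 from rfl, hM]; simp
        rw [heq]
        exact Ideal.zero_mem _
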